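/- Let G₁ and G₂ be finite digraphs such that G = G₁ ⊠ G₂ does not admit any complete digraph on at least two vertices as a strong factor (i.e., G is not isomorphic to B ⊠ K_r for any digraph B and any r ≥ 2). Then for every vertex x₁ of G₁, the size of the S-class of x₁ in G₁ satisfies |S_{G₁}(x₁)| = gcd{ |S_G((x₁,x₂))| : x₂ ∈ V(G₂) }. -/
import Mathlib

/-- Closed out-neighborhood `N⁺[v] = {v} ∪ {x : vx ∈ E}`. -/
def Nout {V : Type*} (E : V → V → Prop) (v : V) : Set V := insert v {x | E v x}

/-- Closed in-neighborhood `N⁻[v] = {v} ∪ {x : xv ∈ E}`. -/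
def Nin {V : Type*} (E : V → V → Prop) (v : V) : Set V := insert v {x | E x v}

/-- The S-equivalence class of a vertex `v`. -/
def Sclass {V : Type*} (E : V → V → Prop) (v : V) : Set V :=
  {u | Nout E u = Nout E v ∧ Nin E u = Nin E v}

/-- Arc relation of the strong product of two digraphs. -/
def StrongAdj {V₁ V₂ : Type*} (E₁ : V₁ → V₁ → Prop) (E₂ : V₂ → V₂ → Prop) :
    V₁ × V₂ → V₁ × V₂ → Prop := fun x y =>
  (E₁ x.1 y.1 ∧ x.2 = y.2) ∨ (x.1 = y.1 ∧ E₂ x.2 y.2) ∨ (E₁ x.1 y.1 ∧ E₂ x.2 y.2)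

open Classical in
lemma Nout_strong {V₁ V₂ : Type*} (E₁ : V₁ → V₁ → Prop) (E₂ : V₂ → V₂ → Prop)
    (u : V₁) (v : V₂) :
    Nout (StrongAdj E₁ E₂) (u, v) = (Nout E₁ u) ×ˢ (Nout E₂ v) := by
  ext ⟨a, b⟩
  simp only [Nout, StrongAdj, Set.mem_insert_iff, Set.mem_setOf_eq, Set.mem_prod,
    Prod.ext_iff]
  tauto

open Classical in
lemma Nin_strong {V₁ V₂ : Type*} (E₁ : V₁ → V₁ → Prop) (E₂ : V₂ → V₂ → Prop)
    (u : V₁) (v : V₂) :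
    Nin (StrongAdj E₁ E₂) (u, v) = (Nin E₁ u) ×ˢ (Nin E₂ v) := by
  ext ⟨a, b⟩
  simp only [Nin, StrongAdj, Set.mem_insert_iff, Set.mem_setOf_eq, Set.mem_prod,
    Prod.ext_iff]
  tauto

lemma mem_Nout_self {V : Type*} (E : V → V → Prop) (v : V) : v ∈ Nout E v :=
  Set.mem_insert _ _

lemma mem_Nin_self {V : Type*} (E : V → V → Prop) (v : V) : v ∈ Nin E v :=
  Set.mem_insert _ _

lemma prod_eq_of_nonempty {α β : Type*} {A C : Set α} {B D : Set β}
    (h : A ×ˢ B = C ×ˢ D) {a : α} {b : β} (ha : a ∈ A) (hb : b ∈ B) :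
    A = C ∧ B = D := by
  have hac : a ∈ C ∧ b ∈ D := by
    have : (a, b) ∈ C ×ˢ D := h ▸ Set.mk_mem_prod ha hb
    exact this
  constructor
  · ext x
    constructor
    · intro hx
      exact ((h ▸ Set.mk_mem_prod hx hb : (x, b) ∈ C ×ˢ D)).1
    · intro hx
      exact ((h.symm ▸ Set.mk_mem_prod hx hac.2 : (x, b) ∈ A ×ˢ B)).1
  · ext y
    constructor
    · intro hy
      exact ((h ▸ Set.mk_mem_prod ha hy : (a, y) ∈ C ×ˢ D)).2
    · intro hy
      exact ((h.symm ▸ Set.mk_mem_prod hac.1 hy : (a, y) ∈ A ×ˢ B)).2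

lemma Sclass_strong {V₁ V₂ : Type*} (E₁ : V₁ → V₁ → Prop) (E₂ : V₂ → V₂ → Prop)
    (x₁ : V₁) (x₂ : V₂) :
    Sclass (StrongAdj E₁ E₂) (x₁, x₂) = (Sclass E₁ x₁) ×ˢ (Sclass E₂ x₂) := by
  ext ⟨u, v⟩
  simp only [Sclass, Set.mem_setOf_eq, Set.mem_prod]
  constructor
  · rintro ⟨ho, hi⟩
    rw [Nout_strong, Nout_strong] at ho
    rw [Nin_strong, Nin_strong] at hi
    have h1 := prod_eq_of_nonempty ho (mem_Nout_self E₁ u) (mem_Nout_self E₂ v)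
    have h2 := prod_eq_of_nonempty hi (mem_Nin_self E₁ u) (mem_Nin_self E₂ v)
    exact ⟨⟨h1.1, h2.1⟩, ⟨h1.2, h2.2⟩⟩
  · rintro ⟨⟨ho1, hi1⟩, ho2, hi2⟩
    rw [Nout_strong, Nout_strong, Nin_strong, Nin_strong, ho1, hi1, ho2, hi2]
    exact ⟨rfl, rfl⟩

lemma ncard_prod {α β : Type*} (A : Set α) (B : Set β) :
    (A ×ˢ B).ncard = A.ncard * B.ncard := by
  rw [← Nat.card_coe_set_eq, ← Nat.card_coe_set_eq, ← Nat.card_coe_set_eq,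
    Nat.card_congr (Equiv.Set.prod A B), Nat.card_prod]

lemma strongAdj_irrefl {V₁ V₂ : Type*} {E₁ : V₁ → V₁ → Prop} {E₂ : V₂ → V₂ → Prop}
    (h₁ : Irreflexive E₁) (h₂ : Irreflexive E₂) :
    Irreflexive (StrongAdj E₁ E₂) := by
  rintro ⟨a, b⟩ (⟨h, _⟩ | ⟨_, h⟩ | ⟨h, _⟩)
  · exact h₁ a h
  · exact h₂ b h
  · exact h₁ a h

/-- Associativity-style propositional identity for strong adjacency. -/
lemma strongAdj_assoc {V₁ V₂ V₃ : Type*} (E₁ : V₁ → V₁ → Prop) (E₂ : V₂ → V₂ → Prop)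
    (E₃ : V₃ → V₃ → Prop) (a b : V₁) (p q : V₂) (α β : V₃) :
    StrongAdj (StrongAdj E₁ E₂) E₃ ((a, p), α) ((b, q), β) ↔
      StrongAdj E₁ (StrongAdj E₂ E₃) (a, (p, α)) (b, (q, β)) := by
  simp only [StrongAdj, Prod.ext_iff]
  tauto


lemma strongAdj_congr_right {V₁ A B : Type*} (E₁ : V₁ → V₁ → Prop)
    (E₂ : A → A → Prop) (T : B → B → Prop) (ψ : A → B)
    (hinj : ∀ u v : A, ψ u = ψ v ↔ u = v)
    (h : ∀ u v : A, E₂ u v ↔ T (ψ u) (ψ v)) :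
    ∀ (a b : V₁) (u v : A), StrongAdj E₁ E₂ (a, u) (b, v) ↔
      StrongAdj E₁ T (a, ψ u) (b, ψ v) := by
  intro a b u v
  simp only [StrongAdj]
  rw [← hinj u v, ← h u v]

section Main

open Classical

variable {V₂ : Type*} [Fintype V₂] (E₂ : V₂ → V₂ → Prop)

/-- The S-relation as a setoid. -/
def Ssetoid : Setoid V₂ where
  r u v := Nout E₂ u = Nout E₂ v ∧ Nin E₂ u = Nin E₂ v
  iseqv := ⟨fun _ => ⟨rfl, rfl⟩, fun h => ⟨h.1.symm, h.2.symm⟩,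
    fun h h' => ⟨h.1.trans h'.1, h.2.trans h'.2⟩⟩

lemma mem_Sclass_iff (u v : V₂) :
    u ∈ Sclass E₂ v ↔ (Ssetoid E₂).r u v := Iff.rfl

lemma same_class_adj (hirr : Irreflexive E₂) {u v : V₂}
    (h : (Ssetoid E₂).r u v) : E₂ u v ↔ u ≠ v := by
  constructor
  · intro he hne; subst hne; exact hirr u he
  · intro hne
    have : v ∈ Nout E₂ u := h.1 ▸ mem_Nout_self E₂ v
    rcases this with h' | h'
    · exact absurd h'.symm hne
    · exact h'

lemma diff_class_adj {u v ru rv : V₂}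
    (hu : (Ssetoid E₂).r u ru) (hv : (Ssetoid E₂).r v rv)
    (huv : ¬ (Ssetoid E₂).r u v) : E₂ u v ↔ E₂ ru rv := by
  have hurv : ¬ (Ssetoid E₂).r u rv := fun h =>
    huv ((Ssetoid E₂).iseqv.trans h ((Ssetoid E₂).iseqv.symm hv))
  have hruv : ¬ (Ssetoid E₂).r ru v := fun h =>
    huv ((Ssetoid E₂).iseqv.trans hu h)
  constructor
  · intro he
    -- v ∈ Nout u = Nout ru
    have h1 : v ∈ Nout E₂ ru := hu.1 ▸ (Set.mem_insert_iff.mpr (Or.inr he))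
    have h2 : E₂ ru v := by
      rcases h1 with h' | h'
      · exact absurd (h' ▸ (Ssetoid E₂).iseqv.refl v : (Ssetoid E₂).r ru v) hruv
      · exact h'
    have h3 : ru ∈ Nin E₂ rv := hv.2 ▸ (Set.mem_insert_iff.mpr (Or.inr h2))
    rcases h3 with h' | h'
    · exact absurd (h' ▸ hu : (Ssetoid E₂).r u rv) hurv
    · exact h'
  · intro he
    have h1 : rv ∈ Nout E₂ u := hu.1.symm ▸ (Set.mem_insert_iff.mpr (Or.inr he))
    have h2 : E₂ u rv := by
      rcases h1 with h' | h'
      · exact absurd (h'.symm ▸ (Ssetoid E₂).iseqv.refl u : (Ssetoid E₂).r u rv) hurv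
      · exact h'
    have h3 : u ∈ Nin E₂ v := hv.2.symm ▸ (Set.mem_insert_iff.mpr (Or.inr h2))
    rcases h3 with h' | h'
    · exact absurd (h' ▸ (Ssetoid E₂).iseqv.refl v : (Ssetoid E₂).r u v) huv
    · exact h'

/-- Main factorization lemma: if every S-class of `E₂` has size divisible by `d ≥ 1`,
then `G₂ ≅ B ⊠ K_d` for some digraph `B`, expressed via an equivalence. -/
lemma factor_exists (hirr : Irreflexive E₂) (d : ℕ) (hd1 : 1 ≤ d)
    (hdvd : ∀ v : V₂, d ∣ (Sclass E₂ v).ncard) :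
    ∃ (W : Type) (F : W → W → Prop), Irreflexive F ∧
      ∃ ψ : V₂ ≃ W × Fin d, ∀ u v : V₂,
        E₂ u v ↔ StrongAdj F (fun a b : Fin d => a ≠ b) (ψ u) (ψ v) := by
  classical
  letI s := Ssetoid E₂
  letI : DecidableEq (Quotient s) := Classical.decEq _
  -- size of a class
  have hclass : ∀ c : Quotient s, {v : V₂ | Quotient.mk s v = c} = Sclass E₂ c.out := by
    intro c
    ext v
    simp only [Set.mem_setOf_eq, mem_Sclass_iff]
    exact ⟨fun h => Quotient.eq.mp (h.trans (Quotient.out_eq c).symm),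
      fun h => (Quotient.sound h).trans (Quotient.out_eq c)⟩
  have hcard : ∀ c : Quotient s,
      Fintype.card {v : V₂ // Quotient.mk s v = c} =
        ({v : V₂ | Quotient.mk s v = c} : Set V₂).ncard := by
    intro c
    rw [← Nat.card_coe_set_eq, Nat.card_eq_fintype_card]
    exact Fintype.card_congr (Equiv.subtypeEquivRight (fun _ => Iff.rfl))
  set m : Quotient s → ℕ := fun c =>
    Fintype.card {v : V₂ // Quotient.mk s v = c} / d with hm
  have hmd : ∀ c : Quotient s,
      Fintype.card {v : V₂ // Quotient.mk s v = c} = m c * d := by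
    intro c
    rw [hm]
    exact (Nat.div_mul_cancel (by rw [hcard, hclass]; exact hdvd _)).symm
  -- per-class equivalence
  have e : ∀ c : Quotient s, {v : V₂ // Quotient.mk s v = c} ≃ Fin (m c) × Fin d :=
    fun c => (Fintype.equivFinOfCardEq (hmd c)).trans finProdFinEquiv.symm
  -- the base vertex set (not yet in Type 0)
  let W₀ := Σ c : Quotient s, Fin (m c)
  let ψ₀ : V₂ ≃ W₀ × Fin d :=
    ((Equiv.sigmaFiberEquiv (fun v : V₂ => Quotient.mk s v)).symm.trans
      (Equiv.sigmaCongrRight e)).trans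
      (Equiv.sigmaProdDistrib (fun c : Quotient s => Fin (m c)) (Fin d)).symm
  have hψ₀ : ∀ v : V₂, ψ₀ v = (⟨⟨Quotient.mk s v, (e (Quotient.mk s v) ⟨v, rfl⟩).1⟩,
      (e (Quotient.mk s v) ⟨v, rfl⟩).2⟩ : W₀ × Fin d) := fun v => rfl
  have hψ₀c : ∀ v : V₂, ((ψ₀ v).1).1 = Quotient.mk s v := fun v => rfl
  -- adjacency between classes
  let Erel : Quotient s → Quotient s → Prop := fun c c' => E₂ c.out c'.out
  let F₀ : W₀ → W₀ → Prop := fun p q => if p.1 = q.1 then p ≠ q else Erel p.1 q.1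
  have hF₀irr : Irreflexive F₀ := by
    intro p
    simp only [F₀, if_pos rfl]
    intro h; exact h rfl
  have key : ∀ u v : V₂,
      E₂ u v ↔ StrongAdj F₀ (fun a b : Fin d => a ≠ b) (ψ₀ u) (ψ₀ v) := by
    intro u v
    have hsimp : ∀ P Q : W₀ × Fin d, StrongAdj F₀ (fun a b : Fin d => a ≠ b) P Q ↔
        (F₀ P.1 Q.1 ∨ (P.1 = Q.1 ∧ P.2 ≠ Q.2)) := by
      intro P Q
      simp only [StrongAdj]
      tauto
    rw [hsimp]
    by_cases hc : Quotient.mk s u = Quotient.mk s v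
    · -- same class
      have hce : ((ψ₀ u).1).1 = ((ψ₀ v).1).1 := by rw [hψ₀c, hψ₀c, hc]
      have hF : F₀ (ψ₀ u).1 (ψ₀ v).1 ↔ (ψ₀ u).1 ≠ (ψ₀ v).1 := by
        simp only [F₀, if_pos hce]
      rw [hF]
      have hr : (Ssetoid E₂).r u v := Quotient.eq.mp hc
      rw [same_class_adj E₂ hirr hr]
      constructor
      · intro hne
        by_cases h1 : (ψ₀ u).1 = (ψ₀ v).1
        · right
          refine ⟨h1, fun h2 => hne (ψ₀.injective ?_)⟩
          exact Prod.ext h1 h2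
        · left; exact h1
      · rintro (h | ⟨h1, h2⟩) heq
        · exact h (by rw [heq])
        · exact h2 (by rw [heq])
    · -- different classes
      have hce : ((ψ₀ u).1).1 ≠ ((ψ₀ v).1).1 := by rw [hψ₀c, hψ₀c]; exact hc
      have hne1 : (ψ₀ u).1 ≠ (ψ₀ v).1 := fun h => hce (by rw [h])
      have hF : F₀ (ψ₀ u).1 (ψ₀ v).1 ↔ Erel (Quotient.mk s u) (Quotient.mk s v) := by
        simp only [F₀, if_neg hce, hψ₀c]
      rw [hF]
      have hru : (Ssetoid E₂).r u (Quotient.mk s u).out :=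
        Quotient.eq.mp (Quotient.out_eq _).symm
      have hrv : (Ssetoid E₂).r v (Quotient.mk s v).out :=
        Quotient.eq.mp (Quotient.out_eq _).symm
      have hkey := diff_class_adj E₂ hru hrv (fun h => hc (Quotient.sound h))
      rw [hkey]
      constructor
      · intro h; left; exact h
      · rintro (h | ⟨h1, _⟩)
        · exact h
        · exact absurd h1 hne1
  -- transport W₀ to Type 0
  haveI : Fintype W₀ := by
    haveI : Fintype (Quotient s) := Quotient.fintype s
    infer_instance
  let ε : W₀ ≃ Fin (Fintype.card W₀) := Fintype.equivFin W₀
  refine ⟨Fin (Fintype.card W₀), fun a b => F₀ (ε.symm a) (ε.symm b),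
    fun a h => hF₀irr _ h, ψ₀.trans (Equiv.prodCongr ε (Equiv.refl (Fin d))),
    fun u v => ?_⟩
  rw [key u v]
  simp only [StrongAdj, Equiv.trans_apply, Equiv.prodCongr_apply, Prod.map,
    Equiv.symm_apply_apply, Equiv.refl_apply, Prod.ext_iff, EmbeddingLike.apply_eq_iff_eq]

end Main

/-- If `G = G₁ ⊠ G₂` admits no complete digraph on at least two vertices as a strong
factor, then for every vertex `x₁` of `G₁`,
`|S_{G₁}(x₁)| = gcd { |S_G((x₁,x₂))| : x₂ ∈ V(G₂) }`. -/
theorem Sclass_card_gcd {V₁ V₂ : Type*} [Fintype V₁] [Fintype V₂]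
    (E₁ : V₁ → V₁ → Prop) (E₂ : V₂ → V₂ → Prop)
    (hirr₁ : Irreflexive E₁) (hirr₂ : Irreflexive E₂)
    (hnoK : ∀ (W : Type) (F : W → W → Prop), Irreflexive F → ∀ r : ℕ, 2 ≤ r →
      ¬ ∃ φ : (V₁ × V₂) ≃ (W × Fin r),
        ∀ x y : V₁ × V₂, StrongAdj E₁ E₂ x y ↔
          StrongAdj F (fun a b : Fin r => a ≠ b) (φ x) (φ y))
    (x₁ : V₁) :
    (Sclass E₁ x₁).ncard =
      Finset.univ.gcd (fun x₂ : V₂ => (Sclass (StrongAdj E₁ E₂) (x₁, x₂)).ncard) := by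
  classical
  -- dispose of the case V₂ empty
  by_cases hV₂ : Nonempty V₂
  case neg =>
    exfalso
    haveI : IsEmpty V₂ := not_nonempty_iff.mp hV₂
    haveI : IsEmpty (V₁ × V₂) := ⟨fun x => IsEmpty.false x.2⟩
    exact hnoK Empty (fun _ _ => False) (fun a => a.elim) 2 le_rfl
      ⟨Equiv.equivOfIsEmpty _ _, fun x _ => (IsEmpty.false x.2).elim⟩
  -- rewrite the classes in the product
  have hrw : ∀ x₂ : V₂, (Sclass (StrongAdj E₁ E₂) (x₁, x₂)).ncard =
      (Sclass E₁ x₁).ncard * (Sclass E₂ x₂).ncard := by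
    intro x₂
    rw [Sclass_strong, ncard_prod]
  simp only [hrw]
  rw [Finset.gcd_mul_left]
  have hnorm : normalize (Sclass E₁ x₁).ncard = (Sclass E₁ x₁).ncard := normalize_eq _
  rw [hnorm]
  -- it suffices to show the gcd of the E₂ class sizes is 1
  suffices h : Finset.univ.gcd (fun x₂ : V₂ => (Sclass E₂ x₂).ncard) = 1 by
    rw [h, mul_one]
  by_contra hg
  set g := Finset.univ.gcd (fun x₂ : V₂ => (Sclass E₂ x₂).ncard) with hgdef
  obtain ⟨y₂⟩ := hV₂
  have hpos : 0 < (Sclass E₂ y₂).ncard := by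
    rw [Set.ncard_pos (Set.toFinite _)]
    exact ⟨y₂, ⟨rfl, rfl⟩⟩
  have hgpos : 0 < g := by
    rcases Nat.eq_zero_or_pos g with h0 | h
    · exfalso
      have := Finset.gcd_eq_zero_iff.mp (hgdef ▸ h0) y₂ (Finset.mem_univ y₂)
      omega
    · exact h
  have hg2 : 2 ≤ g := by omega
  have hdvd : ∀ v : V₂, g ∣ (Sclass E₂ v).ncard := fun v =>
    Finset.gcd_dvd (Finset.mem_univ v)
  obtain ⟨W, F, hFirr, ψ, hψ⟩ := factor_exists E₂ hirr₂ g (by omega) hdvd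
  -- build the isomorphism G₁ ⊠ G₂ ≅ (G₁ ⊠ B) ⊠ K_g
  let F' : V₁ × W → V₁ × W → Prop := StrongAdj E₁ F
  have h0 : (0 : ℕ) < g := by omega
  haveI : Fintype W := Fintype.ofInjective (fun w : W => ψ.symm (w, ⟨0, h0⟩))
    (fun w w' h => by simpa using congrArg (fun v => (ψ v).1) h)
  let ε : V₁ × W ≃ Fin (Fintype.card (V₁ × W)) := Fintype.equivFin _
  apply hnoK (Fin (Fintype.card (V₁ × W)))
    (fun a b => F' (ε.symm a) (ε.symm b))
    (fun a h => strongAdj_irrefl hirr₁ hFirr _ h) g hg2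
  refine ⟨(Equiv.prodCongr (Equiv.refl V₁) ψ).trans
    ((Equiv.prodAssoc V₁ W (Fin g)).symm.trans
      (Equiv.prodCongr ε (Equiv.refl (Fin g)))), fun x y => ?_⟩
  obtain ⟨a, u⟩ := x
  obtain ⟨b, v⟩ := y
  simp only [Equiv.trans_apply, Equiv.prodCongr_apply, Prod.map, Equiv.refl_apply,
    Equiv.prodAssoc_symm_apply]
  have hstep : StrongAdj (fun a b => F' (ε.symm a) (ε.symm b))
      (fun a b : Fin g => a ≠ b)
      (ε (a, (ψ u).1), (ψ u).2) (ε (b, (ψ v).1), (ψ v).2) ↔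
      StrongAdj F' (fun a b : Fin g => a ≠ b)
      ((a, (ψ u).1), (ψ u).2) ((b, (ψ v).1), (ψ v).2) := by
    simp only [StrongAdj, Equiv.symm_apply_apply, Prod.ext_iff,
      EmbeddingLike.apply_eq_iff_eq]
  rw [hstep, strongAdj_assoc]
  exact strongAdj_congr_right E₁ E₂ (StrongAdj F (fun a b : Fin g => a ≠ b)) ψ
    (fun u v => ψ.injective.eq_iff) hψ a b u v
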